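/- (Existence of left limits of the M^p-valued segment map.) Let r > 0, p ∈ [2, ∞), T > 0, and let Y : [-r, T] → ℝ^d be a càdlàg function. For t ∈ (0, T] define Y_t^− : [-r, 0] → ℝ^d by Y_t^−(θ) = Y(t + θ) for θ ∈ [-r, 0) and Y_t^−(0) = lim_{u → t⁻} Y(u). Then lim_{ε → 0⁺} ( ∫_{-r}^0 |Y(t − ε + θ) − Y_t^−(θ)|^p dθ + |Y(t − ε) − Y_t^−(0)|^p ) = 0. Together with right-continuity, this shows that the M^p-valued segment map t ↦ (Y_t, Y(t)) is càdlàg on [0, T]. -/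

import Mathlib

/-!
Extend `Y` by zero outside `[-r, T]` to a function `g`. For `0 < ε ≤ t` and `θ ∈ [-r, 0)` the
integrand is `‖g (t + θ - ε) - g (t + θ)‖ ^ p`, so the integral is at most `‖g (· - ε) - g‖ₚ ^ p`.
A càdlàg function is measurable and bounded on `[-r, T]`, hence `g ∈ Lᵖ`, and this tends to `0` by
continuity of translation in `Lᵖ(ℝ)`. The endpoint term tends to `0` because `L` is the left
limit of `Y` at `t`; the point `θ = 0` is negligible in the integral.
-/

open MeasureTheory Set

/-- A function `f : ℝ → E` is càdlàg on `[a, b]`: right-continuous at every point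
and with (finite) left limits at every point. -/
def CadlagOn {E : Type*} [TopologicalSpace E] (a b : ℝ) (f : ℝ → E) : Prop :=
  (∀ t ∈ Set.Icc a b, ContinuousWithinAt f (Set.Icc t b) t) ∧
  (∀ t ∈ Set.Ioc a b, ∃ L, Filter.Tendsto f (nhdsWithin t (Set.Ico a t)) (nhds L))

open Filter Topology
open scoped ENNReal

theorem tendsto_ceil_mul_div_nhdsGE (x : ℝ) :
    Tendsto (fun n : ℕ => ⌈x * (n + 1)⌉ / (n + 1 : ℝ)) atTop (𝓝[≥] x) := by
  have hpos (n : ℕ) : (0 : ℝ) < n + 1 := n.cast_add_one_pos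
  have hlower (n : ℕ) : x ≤ ⌈x * (n + 1)⌉ / (n + 1 : ℝ) :=
    (le_div_iff₀ (hpos n)).2 (Int.le_ceil _)
  have hupper (n : ℕ) : ⌈x * (n + 1)⌉ / (n + 1 : ℝ) ≤ x + 1 / (n + 1) := by
    rw [div_le_iff₀ (hpos n), add_mul, one_div_mul_cancel (hpos n).ne']
    exact (Int.ceil_lt_add_one _).le
  have hx : Tendsto (fun n : ℕ => x + 1 / (n + 1 : ℝ)) atTop (𝓝 x) := by
    simpa using tendsto_const_nhds.add (tendsto_one_div_add_atTop_nhds_zero_nat (𝕜 := ℝ))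
  exact tendsto_nhdsWithin_iff.2
    ⟨tendsto_of_tendsto_of_tendsto_of_le_of_le tendsto_const_nhds hx hlower hupper,
      Eventually.of_forall hlower⟩

/-- `f` is the pointwise limit of `f ∘ qₙ`, where `qₙ x ∈ [x, b]` rounds `x` up to the grid
`(n + 1)⁻¹ ℤ`; each `f ∘ qₙ` factors through `ℤ`. -/
theorem stronglyMeasurable_indicator_Icc_of_continuousWithinAt {E : Type*} [TopologicalSpace E]
    [TopologicalSpace.PseudoMetrizableSpace E] [Zero E] {a b : ℝ} {f : ℝ → E}
    (hf : ∀ t ∈ Icc a b, ContinuousWithinAt f (Icc t b) t) :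
    StronglyMeasurable ((Icc a b).indicator f) := by
  set q : ℕ → ℝ → ℝ := fun n x => min b (⌈x * (n + 1)⌉ / (n + 1 : ℝ))
  refine stronglyMeasurable_of_tendsto (f := fun n => (Icc a b).indicator (f ∘ q n)) atTop
    (fun n => ?_) (tendsto_pi_nhds.2 fun x => ?_)
  · have hfactor : f ∘ q n = (fun k : ℤ => f (min b (k / (n + 1 : ℝ)))) ∘
        (fun x : ℝ => ⌈x * (n + 1)⌉) := rfl
    rw [hfactor]
    exact (StronglyMeasurable.of_discrete.comp_measurable
      (Int.measurable_ceil.comp (measurable_id.mul_const _))).indicator measurableSet_Icc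
  by_cases hx : x ∈ Icc a b
  · simp only [indicator_of_mem hx]
    have hq : Tendsto (fun n => q n x) atTop (𝓝[Icc x b] x) := by
      have hceil := tendsto_ceil_mul_div_nhdsGE x
      refine tendsto_nhdsWithin_iff.2 ⟨?_, ?_⟩
      · simpa [min_eq_right hx.2] using
          (tendsto_const_nhds (x := b)).min (tendsto_nhdsWithin_iff.1 hceil).1
      · filter_upwards [(tendsto_nhdsWithin_iff.1 hceil).2] with n hn
        exact ⟨le_min hx.2 hn, min_le_left _ _⟩
    exact (hf x hx).tendsto.comp hq
  · simp only [indicator_of_notMem hx, tendsto_const_nhds]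

theorem CadlagOn.isBounded_image {E : Type*} [PseudoMetricSpace E] {a b : ℝ} {f : ℝ → E}
    (hf : CadlagOn a b f) : Bornology.IsBounded (f '' Icc a b) := by
  refine isCompact_Icc.induction_on (p := fun s => Bornology.IsBounded (f '' s)) (by simp)
    (fun s t hst ht => ht.subset (image_mono hst))
    (fun s t hs ht => by simpa only [image_union] using hs.union ht) fun x hx => ?_
  obtain ⟨u, hu, hub⟩ := Metric.exists_isBounded_image_of_tendsto (hf.1 x hx)
  obtain ⟨v, hv, hvb⟩ : ∃ v ∈ 𝓝[Ico a x] x, Bornology.IsBounded (f '' v) := by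
    rcases lt_or_ge a x with hax | hxa
    · obtain ⟨L, hL⟩ := hf.2 x ⟨hax, hx.2⟩
      exact Metric.exists_isBounded_image_of_tendsto hL
    · exact ⟨∅, by simp [Ico_eq_empty_of_le hxa], by simp⟩
  refine ⟨v ∪ u, ?_, by simpa only [image_union] using hvb.union hub⟩
  rw [← Ico_union_Icc_eq_Icc hx.1 hx.2, nhdsWithin_union]
  exact union_mem_sup hv hu

theorem CadlagOn.memLp_indicator {E : Type*} [NormedAddCommGroup E] {a b : ℝ} {f : ℝ → E}
    (hf : CadlagOn a b f) (p : ℝ≥0∞) : MemLp ((Icc a b).indicator f) p volume := by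
  rw [memLp_indicator_iff_restrict measurableSet_Icc]
  obtain ⟨C, hC⟩ := isBounded_iff_forall_norm_le.1 hf.isBounded_image
  refine MemLp.of_bound ?_ C
    (ae_restrict_of_forall_mem measurableSet_Icc fun x hx => hC _ (mem_image_of_mem f hx))
  exact (aestronglyMeasurable_indicator_iff measurableSet_Icc).1
    (stronglyMeasurable_indicator_Icc_of_continuousWithinAt hf.1).aestronglyMeasurable

namespace MeasureTheory.MemLp

variable {E : Type*} [NormedAddCommGroup E] {p : ℝ≥0∞}

theorem integral_norm_rpow_eq_toReal_eLpNorm_rpow {α : Type*} [MeasurableSpace α]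
    {μ : Measure α} {f : α → E} (hp0 : p ≠ 0) (hp : p ≠ ∞) (hf : MemLp f p μ) :
    ∫ a, ‖f a‖ ^ p.toReal ∂μ = (eLpNorm f p μ).toReal ^ p.toReal := by
  have hint : 0 ≤ ∫ a, ‖f a‖ ^ p.toReal ∂μ := integral_nonneg fun a => by positivity
  rw [hf.eLpNorm_eq_integral_rpow_norm hp0 hp, ENNReal.toReal_ofReal (by positivity),
    ← Real.rpow_mul hint, inv_mul_cancel₀ (ENNReal.toReal_pos hp0 hp).ne', Real.rpow_one]

variable {g : ℝ → E}

theorem comp_add_left_sub (hg : MemLp g p) (c : ℝ) :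
    MemLp (fun x => g (c + x) - g x) p volume :=
  (hg.comp_measurePreserving (measurePreserving_add_left volume c)).sub hg

theorem tendsto_eLpNorm_comp_add_left_sub [Fact (1 ≤ p)] (hp : p ≠ ∞) (hg : MemLp g p) :
    Tendsto (fun c => eLpNorm (fun x => g (c + x) - g x) p volume) (𝓝 0) (𝓝 0) := by
  have : Fact (p ≠ ∞) := ⟨hp⟩
  have hcont : Tendsto (fun c : ℝ => DomAddAct.mk c +ᵥ hg.toLp g) (𝓝 0) (𝓝 (hg.toLp g)) := by
    simpa using
      ((DomAddAct.continuous_mk (M := ℝ)).tendsto 0).vadd (tendsto_const_nhds (x := hg.toLp g))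
  simp only [DomAddAct.mk_vadd_toLp] at hcont
  exact (Lp.tendsto_Lp_iff_tendsto_eLpNorm'' _
    (fun c => hg.comp_measurePreserving (measurePreserving_add_left volume c)) g hg).1 hcont

theorem tendsto_integral_norm_comp_add_left_sub_rpow [Fact (1 ≤ p)] (hp : p ≠ ∞)
    (hg : MemLp g p) :
    Tendsto (fun c => ∫ x, ‖g (c + x) - g x‖ ^ p.toReal) (𝓝 0) (𝓝 0) := by
  have hp0 : p ≠ 0 := (zero_lt_one.trans_le Fact.out).ne'
  have h := ((ENNReal.tendsto_toReal ENNReal.zero_ne_top).comp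
    (hg.tendsto_eLpNorm_comp_add_left_sub hp)).rpow_const (p := p.toReal)
      (Or.inr ENNReal.toReal_nonneg)
  rw [ENNReal.toReal_zero, Real.zero_rpow (ENNReal.toReal_pos hp0 hp).ne'] at h
  exact h.congr fun c =>
    ((hg.comp_add_left_sub c).integral_norm_rpow_eq_toReal_eLpNorm_rpow hp0 hp).symm

end MeasureTheory.MemLp

theorem setIntegral_comp_add_left_le_integral {F : ℝ → ℝ} (hF : Integrable F)
    (hF0 : ∀ x, 0 ≤ F x) (t : ℝ) (s : Set ℝ) : ∫ θ in s, F (t + θ) ≤ ∫ x, F x :=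
  calc ∫ θ in s, F (t + θ) ≤ ∫ θ, F (t + θ) :=
        setIntegral_le_integral (hF.comp_add_left t) (Eventually.of_forall fun θ => hF0 (t + θ))
    _ = ∫ x, F x := integral_add_left_eq_self F t

theorem integral_norm_segment_sub_rpow_le {E : Type*} [NormedAddCommGroup E] {r T t ε p : ℝ}
    {Y : ℝ → E} (L : E) (hp : 0 < p) (hY : MemLp ((Icc (-r) T).indicator Y) (ENNReal.ofReal p))
    (hε : ε ∈ Ioc 0 t) (htT : t ≤ T) :
    ∫ θ in Icc (-r) (0:ℝ), ‖Y (t - ε + θ) - (if θ < 0 then Y (t + θ) else L)‖ ^ p ≤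
      ∫ x, ‖(Icc (-r) T).indicator Y (-ε + x) - (Icc (-r) T).indicator Y x‖ ^ p := by
  obtain ⟨hε0, hεt⟩ := hε
  have hint : Integrable
      (fun x => ‖(Icc (-r) T).indicator Y (-ε + x) - (Icc (-r) T).indicator Y x‖ ^ p) := by
    simpa only [ENNReal.toReal_ofReal hp.le] using (hY.comp_add_left_sub (-ε)).integrable_norm_rpow
      (by simpa using hp) ENNReal.ofReal_ne_top
  calc ∫ θ in Icc (-r) (0:ℝ), ‖Y (t - ε + θ) - (if θ < 0 then Y (t + θ) else L)‖ ^ p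
      = ∫ θ in Ico (-r) (0:ℝ),
          ‖(Icc (-r) T).indicator Y (-ε + (t + θ)) - (Icc (-r) T).indicator Y (t + θ)‖ ^ p := by
        rw [integral_Icc_eq_integral_Ico]
        refine setIntegral_congr_fun measurableSet_Ico fun θ hθ => ?_
        obtain ⟨hθr, hθ0⟩ := hθ
        rw [if_pos hθ0, show -ε + (t + θ) = t - ε + θ by ring,
          indicator_of_mem (show t - ε + θ ∈ Icc (-r) T from ⟨by linarith, by linarith⟩),
          indicator_of_mem (show t + θ ∈ Icc (-r) T from ⟨by linarith, by linarith⟩)]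
    _ ≤ ∫ x, ‖(Icc (-r) T).indicator Y (-ε + x) - (Icc (-r) T).indicator Y x‖ ^ p :=
        setIntegral_comp_add_left_le_integral hint (fun x => by positivity) t _

theorem tendsto_sub_nhdsWithin_Ioc_nhdsWithin_Ico {a t : ℝ} (ha : a ≤ 0) :
    Tendsto (fun ε => t - ε) (𝓝[Ioc 0 t] 0) (𝓝[Ico a t] t) := by
  refine tendsto_nhdsWithin_iff.2 ⟨?_, ?_⟩
  · simpa using (tendsto_const_nhds.sub tendsto_id).mono_left (nhdsWithin_le_nhds (a := (0:ℝ)))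
  · filter_upwards [self_mem_nhdsWithin] with ε ⟨hε0, hεt⟩
    exact ⟨by linarith, by linarith⟩

theorem segment_map_left_limits_general (r p T : ℝ) (hr : 0 < r) (hp : 2 ≤ p)
    (d : ℕ) (Y : ℝ → EuclideanSpace ℝ (Fin d)) (hY : CadlagOn (-r) T Y)
    (t : ℝ) (ht : t ∈ Ioc 0 T) (L : EuclideanSpace ℝ (Fin d))
    (hL : Filter.Tendsto Y (nhdsWithin t (Ico (-r) t)) (nhds L)) :
    Filter.Tendsto
      (fun ε => (∫ θ in Icc (-r) (0:ℝ),
          ‖Y (t - ε + θ) - (if θ < 0 then Y (t + θ) else L)‖ ^ p)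
        + ‖Y (t - ε) - L‖ ^ p)
      (nhdsWithin 0 (Ioc 0 t)) (nhds 0) := by
  have hp0 : 0 < p := by linarith
  have : Fact (1 ≤ ENNReal.ofReal p) := ⟨ENNReal.one_le_ofReal.2 (by linarith)⟩
  set g := (Icc (-r) T).indicator Y
  have hg : MemLp g (ENNReal.ofReal p) volume := hY.memLp_indicator _
  have hshift : Tendsto (fun ε => ∫ x, ‖g (-ε + x) - g x‖ ^ p) (𝓝[Ioc 0 t] 0) (𝓝 0) := by
    have hneg : Tendsto (fun ε : ℝ => -ε) (𝓝[Ioc 0 t] 0) (𝓝 0) := by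
      simpa using (tendsto_neg (0 : ℝ)).mono_left nhdsWithin_le_nhds
    simpa only [ENNReal.toReal_ofReal hp0.le, Function.comp_def] using
      (hg.tendsto_integral_norm_comp_add_left_sub_rpow ENNReal.ofReal_ne_top).comp hneg
  have hsegment := squeeze_zero'
    (Eventually.of_forall fun ε => integral_nonneg fun θ => by positivity)
    (eventually_mem_nhdsWithin.mono fun ε hε =>
      integral_norm_segment_sub_rpow_le L hp0 hg hε ht.2) hshift
  have hendpoint := ((hL.comp (tendsto_sub_nhdsWithin_Ioc_nhdsWithin_Ico (by linarith))).sub_const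
    L).norm.rpow_const (p := p) (Or.inr hp0.le)
  simpa [Real.zero_rpow hp0.ne'] using hsegment.add hendpoint

/-- Existence of left limits of the `M^p`-valued segment map of a càdlàg path
`Y : [-r,T] → ℝ^d`: for `t ∈ (0,T]`, if `L` is the left limit of `Y` at `t`, then the
segment at `t - ε` converges in `M^p` to `Y_t⁻`, defined by `Y_t⁻(θ) = Y(t+θ)` for
`θ ∈ [-r,0)` and `Y_t⁻(0) = L`, as `ε → 0⁺`. -/
theorem segment_map_left_limits (r p T : ℝ) (hr : 0 < r) (hp : 2 ≤ p) (hT : 0 < T)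
    (d : ℕ) (Y : ℝ → EuclideanSpace ℝ (Fin d)) (hY : CadlagOn (-r) T Y)
    (t : ℝ) (ht : t ∈ Ioc 0 T) (L : EuclideanSpace ℝ (Fin d))
    (hL : Filter.Tendsto Y (nhdsWithin t (Ico (-r) t)) (nhds L)) :
    Filter.Tendsto
      (fun ε => (∫ θ in Icc (-r) (0:ℝ),
          ‖Y (t - ε + θ) - (if θ < 0 then Y (t + θ) else L)‖ ^ p)
        + ‖Y (t - ε) - L‖ ^ p)
      (nhdsWithin 0 (Ioc 0 t)) (nhds 0) :=
  segment_map_left_limits_general r p T hr hp d Y hY t ht L hL
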